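/- Suppose T is 2-torsion free and the following three conditions hold: (1) Z(A)_k = π_A(Z(T)); (2) Z(B)_k = π_B(Z(T)); (3) there exists m0 ∈ M such that Z(T) = {a + b : a ∈ Z(A), b ∈ Z(B), am0 = m0b}. Then every k-commuting R-linear map Θ: T → T is proper, i.e., there exist λ ∈ Z(T) and an R-linear map ζ: T → Z(T) such that Θ(t) = λt + ζ(t) for all t ∈ T. -/

import Mathlib

/-- The iterated commutator: `iterComm 0 x y = x`, `iterComm (i+1) x y = [iterComm i x y, y]`. -/
def iterComm {T : Type*} [Ring T] : ℕ → T → T → T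
  | 0, x, _ => x
  | i + 1, x, y => iterComm i x y * y - y * iterComm i x y

/-!
Write `P`, `Q`, `S` for the `eTe`, `eTf`, `fTf` corners of `Θ`. Reading off the corners of
`[Θ t, t]_k = 0` for `t = a + m + b`, and using that `[x, u]_k = 0` forces `[x, u] = 0` for an
idempotent `u` (applied to `u = e ± m`), one finds that `Q(m) = P(e) m - m S(e)`, that `Q` vanishes
on `A`, and that `P(e)`, `S(e)`, `P(m)`, `S(m)`, `S(a)` are `k`-central in their corners; by (1)
and (2) they are corners of central elements, which yields a central `λ` with `Q(m) = λ m`.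

For `a ∈ A`, pick a central `w` with `S(a) = f w f` and put `δ = P(a) - (e λ e) a - e w e`. The part
of the `M`-corner of `[Θ (a + m), a + m]_k` that is odd in `m` (isolated with 2-torsion freeness)
reads `(∑ (-a)^(k-1-i) [δ, a]_i) m = 0`, so the sum vanishes by faithfulness, and telescoping
against `[δ, a]_k = 0` gives `(-a)^k δ = 0`. The same argument at `a + e` gives `(a + e)^k δ = 0`,
and since `(a + e) - a` acts as the identity on `δ`, `δ = 0`, i.e. `Θ a - λ a = w` is central.
The corner `B` follows by passing to `Tᵐᵒᵖ`, and `M` from (3), since `P(m) m₀ = m₀ S(m)` by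
polarizing `P(m) m = m S(m)`.
-/


section Ring

variable {T : Type*} [Ring T]

@[simp] lemma iterComm_zero (x y : T) : iterComm 0 x y = x := rfl

lemma iterComm_succ (i : ℕ) (x y : T) :
    iterComm (i + 1) x y = iterComm i x y * y - y * iterComm i x y := rfl

lemma iterComm_add_left (i : ℕ) (x x' y : T) :
    iterComm i (x + x') y = iterComm i x y + iterComm i x' y := by
  induction i with
  | zero => rfl
  | succ i ih => simp only [iterComm_succ, ih]; noncomm_ring

lemma iterComm_neg_left (i : ℕ) (x y : T) : iterComm i (-x) y = -iterComm i x y := by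
  induction i with
  | zero => rfl
  | succ i ih => simp only [iterComm_succ, ih]; noncomm_ring

lemma iterComm_sub_left (i : ℕ) (x x' y : T) :
    iterComm i (x - x') y = iterComm i x y - iterComm i x' y := by
  rw [sub_eq_add_neg, iterComm_add_left, iterComm_neg_left, ← sub_eq_add_neg]

lemma iterComm_zero_left (i : ℕ) (y : T) : iterComm i 0 y = 0 := by
  induction i with
  | zero => rfl
  | succ i ih => rw [iterComm_succ, ih, zero_mul, mul_zero, sub_zero]

lemma iterComm_add (i j : ℕ) (x y : T) :
    iterComm (i + j) x y = iterComm j (iterComm i x y) y := by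
  induction j with
  | zero => rfl
  | succ j ih => rw [← add_assoc, iterComm_succ, ih, iterComm_succ]

lemma iterComm_eq_zero_of_commute {x y : T} (h : Commute x y) {i : ℕ} (hi : i ≠ 0) :
    iterComm i x y = 0 := by
  obtain ⟨i, rfl⟩ := Nat.exists_eq_add_one_of_ne_zero hi
  rw [add_comm, iterComm_add, iterComm_succ, iterComm_zero, h.eq, sub_self, iterComm_zero_left]

lemma iterComm_three_of_isIdempotentElem {u : T} (hu : IsIdempotentElem u) (x : T) :
    iterComm 3 x u = iterComm 1 x u := by
  set v := u * u - u with hv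
  have key : iterComm 3 x u - iterComm 1 x u
      = x * (u * v + v) - 3 * (u * x * v) + 3 * (v * x * u) - (u * v + v) * x := by
    simp only [iterComm_succ, iterComm_zero, hv]; noncomm_ring
  rw [hv, hu.eq, sub_self] at key
  simpa [sub_eq_zero] using key

lemma commute_of_iterComm_eq_zero {x u : T} (hu : IsIdempotentElem u) {k : ℕ} (hk : k ≠ 0)
    (h : iterComm k x u = 0) : Commute x u := by
  have hodd : ∀ j, iterComm (2 * j + 1) x u = iterComm 1 x u := by
    intro j
    induction j with
    | zero => rfl
    | succ j ih =>
      rw [show 2 * (j + 1) + 1 = 2 * j + 3 by ring, iterComm_add,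
        iterComm_three_of_isIdempotentElem hu, ← iterComm_add, ih]
  have h1 : iterComm 1 x u = 0 := by
    rw [← hodd (k - 1), show 2 * (k - 1) + 1 = k + (k - 1) by omega, iterComm_add, h,
      iterComm_zero_left]
  exact sub_eq_zero.mp h1

lemma commute_apply_of_isIdempotentElem {Θ : T →+ T} {k : ℕ} (hk : k ≠ 0)
    (hΘ : ∀ t, iterComm k (Θ t) t = 0) {u : T} (hu : IsIdempotentElem u) : Commute (Θ u) u :=
  commute_of_iterComm_eq_zero hu hk (hΘ u)

lemma neg_pow_mul_eq_zero_iff {x d : T} {n : ℕ} : (-x) ^ n * d = 0 ↔ x ^ n * d = 0 := by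
  rw [neg_pow, mul_assoc, (isUnit_one.neg.pow n).mul_right_eq_zero]

open Finset in
/-- `d = (X + Y) ^ (2 n) * d`, and each binomial term is killed by `X ^ n` or `Y ^ n`. -/
lemma eq_zero_of_pow_mul_eq_zero {X Y d : T} {n : ℕ} (hXY : Commute X Y)
    (hX : X ^ n * d = 0) (hY : Y ^ n * d = 0) (hd : (X + Y) * d = d) : d = 0 := by
  have hpow : ∀ j, (X + Y) ^ j * d = d := by
    intro j
    induction j with
    | zero => rw [pow_zero, one_mul]
    | succ j ih => rw [pow_succ, mul_assoc, hd, ih]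
  have hterm : ∀ i j, n ≤ i ∨ n ≤ j → X ^ i * Y ^ j * d = 0 := by
    rintro i j (hi | hj)
    · obtain ⟨i, rfl⟩ := Nat.exists_eq_add_of_le hi
      have hc : Commute (X ^ n) (X ^ i * Y ^ j) :=
        (Commute.pow_pow_self X n i).mul_right (hXY.pow_pow n j)
      rw [pow_add, mul_assoc (X ^ n), hc.eq, mul_assoc, hX, mul_zero]
    · obtain ⟨j, rfl⟩ := Nat.exists_eq_add_of_le hj
      rw [add_comm, pow_add, ← mul_assoc, mul_assoc, hY, mul_zero]
  calc d = (X + Y) ^ (2 * n) * d := (hpow _).symm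
    _ = ∑ i ∈ range (2 * n + 1), X ^ i * Y ^ (2 * n - i) * d * (Nat.choose (2 * n) i : T) := by
        rw [hXY.add_pow, sum_mul]
        refine sum_congr rfl fun i _ => ?_
        rw [mul_assoc, (Nat.cast_commute _ d).eq, ← mul_assoc]
    _ = 0 := sum_eq_zero fun i _ => by rw [hterm i _ (by omega), zero_mul]

/-- `iterCommSum c δ a n = ∑ i < n, c ^ (n - 1 - i) * iterComm i δ a`. -/
def iterCommSum (c δ a : T) : ℕ → T
  | 0 => 0
  | n + 1 => c * iterCommSum c δ a n + iterComm n δ a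

/-- Since left multiplication by `c` commutes with `ad a`, this is the geometric-sum identity
`(L_c - ad a) ∑ L_c^(n-1-i) (ad a)^i = L_c^n - (ad a)^n`. -/
lemma mul_iterCommSum_sub (c δ a : T) (hc : Commute c a) (n : ℕ) :
    c * iterCommSum c δ a n - (iterCommSum c δ a n * a - a * iterCommSum c δ a n)
      = c ^ n * δ - iterComm n δ a := by
  induction n with
  | zero => simp [iterCommSum]
  | succ n ih =>
    calc c * iterCommSum c δ a (n + 1)
          - (iterCommSum c δ a (n + 1) * a - a * iterCommSum c δ a (n + 1))
        = c * (c * iterCommSum c δ a n - (iterCommSum c δ a n * a - a * iterCommSum c δ a n))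
          + c * iterComm n δ a - iterComm (n + 1) δ a := by
          simp only [iterCommSum, iterComm_succ, mul_sub, mul_add, add_mul, ← mul_assoc, hc.eq]
          abel
      _ = c ^ (n + 1) * δ - iterComm (n + 1) δ a := by
          rw [ih, mul_sub, ← mul_assoc, ← pow_succ']; abel

lemma pow_mul_eq_zero_of_iterCommSum_eq_zero {c δ a : T} (hc : Commute c a) {n : ℕ}
    (hn : iterComm n δ a = 0) (hs : iterCommSum c δ a n = 0) : c ^ n * δ = 0 := by
  have h := mul_iterCommSum_sub c δ a hc n
  simpa [hs, hn] using h.symm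

lemma mul_add_mul_eq_of_commute (htf : ∀ t : T, t + t = 0 → t = 0)
    {X Y u v : T} (h₁ : Commute (X + Y) (u + v)) (h₂ : Commute (X - Y) (u - v)) :
    X * v + Y * u = v * X + u * Y := by
  refine sub_eq_zero.mp (htf _ ?_)
  calc X * v + Y * u - (v * X + u * Y) + (X * v + Y * u - (v * X + u * Y))
      = ((X + Y) * (u + v) - (u + v) * (X + Y)) - ((X - Y) * (u - v) - (u - v) * (X - Y)) := by
        noncomm_ring
    _ = 0 := by rw [h₁.eq, h₂.eq, sub_self, sub_self, sub_zero]

end Ring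

section IterCommM

variable {T : Type*} [Ring T]

/-- The `eTf`-corner of `iterComm j (P + Q + S) (a + m + b)` when `P, a` lie in `eTe`,
`Q, m` in `eTf` and `S, b` in `fTf` (see `TriangularDecomp.iterComm_add_add_eq`). -/
def iterCommM (a m b P Q S : T) : ℕ → T
  | 0 => Q
  | j + 1 => iterComm j P a * m - m * iterComm j S b + iterCommM a m b P Q S j * b
      - a * iterCommM a m b P Q S j

variable {a m b P Q S : T}

lemma iterCommM_succ (j : ℕ) :
    iterCommM a m b P Q S (j + 1) = iterComm j P a * m - m * iterComm j S b
      + iterCommM a m b P Q S j * b - a * iterCommM a m b P Q S j := rfl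

lemma iterCommM_add {P' Q' S' : T} (j : ℕ) :
    iterCommM a m b (P + P') (Q + Q') (S + S') j
      = iterCommM a m b P Q S j + iterCommM a m b P' Q' S' j := by
  induction j with
  | zero => rfl
  | succ j ih => simp only [iterCommM_succ, ih, iterComm_add_left]; noncomm_ring

/-- Replacing `m` by `-m` flips the sign of the part of `iterCommM` that is odd in `m`. -/
lemma iterCommM_sub_iterCommM_neg {P' Q' S' : T} (j : ℕ) :
    iterCommM a m b (P + P') (Q + Q') (S + S') j - iterCommM a (-m) b (P - P') (Q - Q') (S - S') j
      = iterCommM a m b P Q' S j + iterCommM a m b P Q' S j := by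
  induction j with
  | zero => show Q + Q' - (Q - Q') = Q' + Q'; abel
  | succ j ih =>
    simp only [iterCommM_succ, iterComm_add_left, iterComm_sub_left]
    rw [eq_add_of_sub_eq ih]
    noncomm_ring

lemma iterCommM_eq_zero_of_commute (hP : Commute P a) (hS : Commute S b)
    (h : P * m - m * S + Q * b - a * Q = 0) {j : ℕ} (hj : j ≠ 0) : iterCommM a m b P Q S j = 0 := by
  obtain ⟨j, rfl⟩ := Nat.exists_eq_add_one_of_ne_zero hj
  induction j with
  | zero => exact h
  | succ j ih =>
    rw [iterCommM_succ, ih j.succ_ne_zero, iterComm_eq_zero_of_commute hP j.succ_ne_zero,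
      iterComm_eq_zero_of_commute hS j.succ_ne_zero]
    simp

lemma iterCommM_zero_zero (j : ℕ) : iterCommM a 0 0 P Q S j = (-a) ^ j * Q := by
  induction j with
  | zero => rw [pow_zero, one_mul]; rfl
  | succ j ih => rw [iterCommM_succ, ih, pow_succ', mul_assoc]; noncomm_ring

lemma iterCommM_zero_of_mul_eq (hQ : Q * b = Q) (j : ℕ) :
    iterCommM a 0 b P Q S j = (1 - a) ^ j * Q := by
  induction j with
  | zero => rw [pow_zero, one_mul]; rfl
  | succ j ih =>
    rw [iterCommM_succ, ih, mul_assoc, hQ, pow_succ', mul_assoc]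
    noncomm_ring

lemma iterCommM_eq_iterCommSum_mul (j : ℕ) :
    iterCommM a m 0 P 0 0 j = iterCommSum (-a) P a j * m := by
  induction j with
  | zero => rw [iterCommSum, zero_mul]; rfl
  | succ j ih =>
    rw [iterCommM_succ, ih, iterCommSum, iterComm_zero_left]
    noncomm_ring

end IterCommM

section Corner

open MulOpposite

variable {T : Type*} [Ring T]

def corner (u v : T) : AddSubgroup T where
  carrier := {x | u * x = x ∧ x * v = x}
  add_mem' hx hy := ⟨by rw [mul_add, hx.1, hy.1], by rw [add_mul, hx.2, hy.2]⟩
  zero_mem' := ⟨mul_zero u, zero_mul v⟩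
  neg_mem' hx := ⟨by rw [mul_neg, hx.1], by rw [neg_mul, hx.2]⟩

variable {u v w x y : T}

lemma mem_corner : x ∈ corner u v ↔ u * x = x ∧ x * v = x := Iff.rfl

lemma mul_mem_corner (hx : x ∈ corner u v) (hy : y ∈ corner v w) : x * y ∈ corner u w :=
  ⟨by rw [← mul_assoc, hx.1], by rw [mul_assoc, hy.2]⟩

lemma mul_eq_zero_of_mem_corner {v' : T} (hx : x ∈ corner u v) (hy : y ∈ corner v' w)
    (h : v * v' = 0) : x * y = 0 := by
  rw [← hx.2, ← hy.1, mul_assoc, ← mul_assoc v, h, zero_mul, mul_zero]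

lemma mul_mul_mem_corner (hu : IsIdempotentElem u) (hv : IsIdempotentElem v) (x : T) :
    u * x * v ∈ corner u v :=
  ⟨by rw [← mul_assoc, ← mul_assoc, hu.eq], by rw [mul_assoc, hv.eq]⟩

lemma mem_corner_iff_eq (hu : IsIdempotentElem u) (hv : IsIdempotentElem v) :
    x ∈ corner u v ↔ x = u * x * v :=
  ⟨fun hx => by rw [hx.1, hx.2], fun hx => hx ▸ mul_mul_mem_corner hu hv x⟩

lemma op_mem_corner_iff : op x ∈ corner (op u) (op v) ↔ x ∈ corner v u := by
  simp only [mem_corner, ← op_mul, op_inj, and_comm]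

lemma iterComm_mem_corner (hx : x ∈ corner u u) (hy : y ∈ corner u u) (i : ℕ) :
    iterComm i x y ∈ corner u u := by
  induction i with
  | zero => exact hx
  | succ i ih => exact sub_mem (mul_mem_corner ih hy) (mul_mem_corner hy ih)

lemma iterComm_add_right_of_mem_corner (hx : x ∈ corner u u) (hy : y ∈ corner u u) (i : ℕ) :
    iterComm i x (y + u) = iterComm i x y := by
  induction i with
  | zero => rfl
  | succ i ih =>
    have hi := iterComm_mem_corner hx hy i
    rw [iterComm_succ, ih, iterComm_succ, mul_add, add_mul, hi.1, hi.2, add_sub_add_right_eq_sub]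

lemma iterCommSum_mem_corner {c : T} (hc : c ∈ corner u u) (hx : x ∈ corner u u)
    (hy : y ∈ corner u u) (n : ℕ) : iterCommSum c x y n ∈ corner u u := by
  induction n with
  | zero => exact zero_mem _
  | succ n ih => exact add_mem (mul_mem_corner hc ih) (iterComm_mem_corner hx hy n)

-- `Z(uTu)_k ⊆ π_u(Z(T))` in the notation of conditions (1) and (2).
def HasCentralLifts (u : T) (k : ℕ) : Prop :=
  ∀ c ∈ corner u u, (∀ x ∈ corner u u, iterComm k c x = 0) → ∃ z ∈ Subring.center T, c = u * z * u

lemma HasCentralLifts.of_forall {k : ℕ} (hu : IsIdempotentElem u)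
    (h : ∀ c : T, (c = u * c * u ∧ ∀ x : T, x = u * x * u → iterComm k c x = 0) →
      ∃ z : T, (∀ x : T, z * x = x * z) ∧ c = u * z * u) :
    HasCentralLifts u k := by
  intro c hc hcx
  obtain ⟨z, hz, hcz⟩ := h c ⟨(mem_corner_iff_eq hu hu).mp hc,
    fun x hx => hcx x ((mem_corner_iff_eq hu hu).mpr hx)⟩
  exact ⟨z, Subring.mem_center_iff.mpr fun g => (hz g).symm, hcz⟩

lemma iterComm_op (i : ℕ) (x y : T) :
    iterComm i (op x) (op y) = (-1) ^ i * op (iterComm i x y) := by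
  induction i with
  | zero => rw [pow_zero, one_mul]; rfl
  | succ i ih =>
    have hs : Commute ((-1 : Tᵐᵒᵖ) ^ i) (op y) := (Commute.neg_one_left _).pow_left i
    rw [iterComm_succ, ih, iterComm_succ, op_sub, op_mul, op_mul, pow_succ, ← mul_assoc (op y),
      ← hs.eq]
    generalize (-1 : Tᵐᵒᵖ) ^ i = s
    noncomm_ring

lemma iterComm_op_eq_zero_iff {i : ℕ} {x y : T} :
    iterComm i (op x) (op y) = 0 ↔ iterComm i x y = 0 := by
  rw [iterComm_op, (isUnit_one.neg.pow i).mul_right_eq_zero, op_eq_zero_iff]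

lemma HasCentralLifts.op {u : T} {k : ℕ} (h : HasCentralLifts u k) :
    HasCentralLifts (op u) k := by
  intro c hc hcx
  obtain ⟨z, hz, hcz⟩ := h (unop c) (op_mem_corner_iff.mp hc) fun x hx =>
    iterComm_op_eq_zero_iff.mp (hcx (MulOpposite.op x) (op_mem_corner_iff.mpr hx))
  refine ⟨MulOpposite.op z, op_mem_center_iff.mpr hz, unop_injective ?_⟩
  simp only [hcz, unop_mul, unop_op, mul_assoc]

end Corner

structure TriangularDecomp (T : Type*) [Ring T] where
  e : T
  f : T
  e_add_f : e + f = 1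
  isIdempotentElem_e : IsIdempotentElem e
  f_mul_mul_e : ∀ g, f * g * e = 0
  faithful_left : ∀ a ∈ corner e e, (∀ m ∈ corner e f, a * m = 0) → a = 0
  faithful_right : ∀ b ∈ corner f f, (∀ m ∈ corner e f, m * b = 0) → b = 0

namespace TriangularDecomp

variable {T : Type*} [Ring T] (D : TriangularDecomp T)

lemma f_eq_one_sub : D.f = 1 - D.e := eq_sub_of_add_eq' D.e_add_f

lemma isIdempotentElem_f : IsIdempotentElem D.f := by
  rw [f_eq_one_sub]; exact D.isIdempotentElem_e.one_sub

lemma e_mul_f : D.e * D.f = 0 := by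
  rw [f_eq_one_sub, mul_sub, mul_one, D.isIdempotentElem_e.eq, sub_self]

lemma f_mul_e : D.f * D.e = 0 := by
  rw [f_eq_one_sub, sub_mul, one_mul, D.isIdempotentElem_e.eq, sub_self]

abbrev A : AddSubgroup T := corner D.e D.e
abbrev M : AddSubgroup T := corner D.e D.f
abbrev B : AddSubgroup T := corner D.f D.f

def projA : T →+ T := (AddMonoidHom.mulRight D.e).comp (AddMonoidHom.mulLeft D.e)
def projM : T →+ T := (AddMonoidHom.mulRight D.f).comp (AddMonoidHom.mulLeft D.e)
def projB : T →+ T := (AddMonoidHom.mulRight D.f).comp (AddMonoidHom.mulLeft D.f)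

variable {D}
variable {a m b x y z : T}

lemma e_mem_A : D.e ∈ D.A := ⟨D.isIdempotentElem_e.eq, D.isIdempotentElem_e.eq⟩

lemma f_mem_B : D.f ∈ D.B := ⟨D.isIdempotentElem_f.eq, D.isIdempotentElem_f.eq⟩

@[simp] lemma projA_apply : D.projA x = D.e * x * D.e := rfl
@[simp] lemma projM_apply : D.projM x = D.e * x * D.f := rfl
@[simp] lemma projB_apply : D.projB x = D.f * x * D.f := rfl

lemma projA_mem (x : T) : D.projA x ∈ D.A :=
  mul_mul_mem_corner D.isIdempotentElem_e D.isIdempotentElem_e x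
lemma projM_mem (x : T) : D.projM x ∈ D.M :=
  mul_mul_mem_corner D.isIdempotentElem_e D.isIdempotentElem_f x
lemma projB_mem (x : T) : D.projB x ∈ D.B :=
  mul_mul_mem_corner D.isIdempotentElem_f D.isIdempotentElem_f x

lemma projA_add_projM_add_projB (x : T) : D.projA x + D.projM x + D.projB x = x := by
  have h : (D.e + D.f) * x * (D.e + D.f) = D.e * x * D.e + D.e * x * D.f + D.f * x * D.f
      + D.f * x * D.e := by noncomm_ring
  rw [D.e_add_f, one_mul, mul_one, D.f_mul_mul_e, add_zero] at h
  exact h.symm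

lemma eq_zero_of_add_eq_zero (ha : a ∈ D.A) (hm : m ∈ D.M) (hb : b ∈ D.B)
    (h : a + m + b = 0) : a = 0 ∧ m = 0 ∧ b = 0 := by
  have hfe := D.f_mul_e
  have hA : (a + m + b) * D.e = a := by
    rw [add_mul, add_mul, ha.2, mul_eq_zero_of_mem_corner hm e_mem_A hfe,
      mul_eq_zero_of_mem_corner hb e_mem_A hfe, add_zero, add_zero]
  have hB : D.f * (a + m + b) = b := by
    rw [mul_add, mul_add, hb.1, ← ha.1, ← hm.1, ← mul_assoc, ← mul_assoc, hfe, zero_mul,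
      zero_mul, zero_add, zero_add]
  rw [h, zero_mul] at hA
  rw [h, mul_zero] at hB
  subst hA hB
  simpa using h

lemma projM_mul_of_mem_M (hm : m ∈ D.M) (x : T) : D.projM (x * m) = D.projA x * m := by
  simp only [projM_apply, projA_apply, mul_assoc, hm.1, hm.2]

lemma projM_mem_M_mul (hm : m ∈ D.M) (x : T) : D.projM (m * x) = m * D.projB x := by
  simp only [projM_apply, projB_apply, ← mul_assoc, hm.1, hm.2]

lemma projM_mul_e (x : T) : D.projM (x * D.e) = 0 := by
  rw [projM_apply, mul_assoc, mul_assoc, D.e_mul_f, mul_zero, mul_zero]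

lemma projM_e_mul (x : T) : D.projM (D.e * x) = D.projM x := by
  rw [projM_apply, projM_apply, ← mul_assoc, D.isIdempotentElem_e.eq]

lemma projM_eq_zero_of_mem_center (hz : z ∈ Subring.center T) : D.projM z = 0 := by
  rw [projM_apply, mul_assoc, ← Subring.mem_center_iff.mp hz, ← mul_assoc, D.e_mul_f, zero_mul]

lemma projA_add_projB_of_mem_center (hz : z ∈ Subring.center T) :
    D.projA z + D.projB z = z := by
  have h := D.projA_add_projM_add_projB z
  rwa [projM_eq_zero_of_mem_center hz, add_zero] at h

lemma projA_mul_of_mem_center (hz : z ∈ Subring.center T) (hx : D.e * x = x) :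
    D.projA z * x = z * x := by
  rw [projA_apply, mul_assoc, hx, Subring.mem_center_iff.mp hz D.e, mul_assoc, hx]

lemma mul_projA_of_mem_center (hz : z ∈ Subring.center T) (hx : x * D.e = x) :
    x * D.projA z = z * x := by
  rw [projA_apply, ← mul_assoc, ← mul_assoc, hx, Subring.mem_center_iff.mp hz, mul_assoc, hx]

lemma projB_mul_of_mem_center (hz : z ∈ Subring.center T) (hx : D.f * x = x) :
    D.projB z * x = z * x := by
  rw [projB_apply, mul_assoc, hx, Subring.mem_center_iff.mp hz D.f, mul_assoc, hx]

lemma mul_projB_of_mem_center (hz : z ∈ Subring.center T) (hx : x * D.f = x) :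
    x * D.projB z = z * x := by
  rw [projB_apply, ← mul_assoc, ← mul_assoc, hx, Subring.mem_center_iff.mp hz, mul_assoc, hx]

lemma commute_projA_of_mem_center (hz : z ∈ Subring.center T) (ha : a ∈ D.A) :
    Commute (D.projA z) a := by
  show D.projA z * a = a * D.projA z
  rw [projA_mul_of_mem_center hz ha.1, mul_projA_of_mem_center hz ha.2]

lemma commute_projB_of_mem_center (hz : z ∈ Subring.center T) (hb : b ∈ D.B) :
    Commute (D.projB z) b := by
  show D.projB z * b = b * D.projB z
  rw [projB_mul_of_mem_center hz hb.1, mul_projB_of_mem_center hz hb.2]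

variable {P Q S : T}

lemma iterCommM_mem (ha : a ∈ D.A) (hm : m ∈ D.M) (hb : b ∈ D.B) (hP : P ∈ D.A) (hQ : Q ∈ D.M)
    (hS : S ∈ D.B) (j : ℕ) : iterCommM a m b P Q S j ∈ D.M := by
  induction j with
  | zero => exact hQ
  | succ j ih =>
    exact sub_mem (add_mem (sub_mem (mul_mem_corner (iterComm_mem_corner hP ha j) hm)
      (mul_mem_corner hm (iterComm_mem_corner hS hb j))) (mul_mem_corner ih hb))
      (mul_mem_corner ha ih)

lemma iterComm_add_add_eq (ha : a ∈ D.A) (hm : m ∈ D.M) (hb : b ∈ D.B) (hP : P ∈ D.A) (hQ : Q ∈ D.M)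
    (hS : S ∈ D.B) (j : ℕ) :
    iterComm j (P + Q + S) (a + m + b)
      = iterComm j P a + iterCommM a m b P Q S j + iterComm j S b := by
  induction j with
  | zero => rfl
  | succ j ih =>
    have hPj := iterComm_mem_corner hP ha j
    have hQj := iterCommM_mem ha hm hb hP hQ hS j
    have hSj := iterComm_mem_corner hS hb j
    have hef := D.e_mul_f
    have hfe := D.f_mul_e
    set Pj := iterComm j P a
    set Qj := iterCommM a m b P Q S j
    set Sj := iterComm j S b
    have expand : (Pj + Qj + Sj) * (a + m + b) - (a + m + b) * (Pj + Qj + Sj)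
        = (Pj * a - a * Pj) + (Pj * m - m * Sj + Qj * b - a * Qj) + (Sj * b - b * Sj)
          + ((Pj * b + Qj * a + Qj * m + Sj * a + Sj * m)
            - (a * Sj + m * Pj + m * Qj + b * Pj + b * Qj)) := by noncomm_ring
    rw [iterComm_succ, ih, expand, mul_eq_zero_of_mem_corner hPj hb hef,
      mul_eq_zero_of_mem_corner hQj ha hfe, mul_eq_zero_of_mem_corner hQj hm hfe,
      mul_eq_zero_of_mem_corner hSj ha hfe, mul_eq_zero_of_mem_corner hSj hm hfe,
      mul_eq_zero_of_mem_corner ha hSj hef, mul_eq_zero_of_mem_corner hm hPj hfe,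
      mul_eq_zero_of_mem_corner hm hQj hfe, mul_eq_zero_of_mem_corner hb hPj hfe,
      mul_eq_zero_of_mem_corner hb hQj hfe]
    simp only [add_zero, sub_zero]
    rfl

variable {w lam : T} {Θ : T →+ T} {k : ℕ}

lemma iterComm_peirce_eq_zero (hΘ : ∀ t, iterComm k (Θ t) t = 0) (ha : a ∈ D.A) (hm : m ∈ D.M)
    (hb : b ∈ D.B) :
    iterComm k (D.projA (Θ (a + m + b))) a = 0
      ∧ iterCommM a m b (D.projA (Θ (a + m + b))) (D.projM (Θ (a + m + b)))
          (D.projB (Θ (a + m + b))) k = 0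
      ∧ iterComm k (D.projB (Θ (a + m + b))) b = 0 := by
  set t := a + m + b
  have h := iterComm_add_add_eq ha hm hb (projA_mem (Θ t)) (projM_mem (Θ t)) (projB_mem (Θ t)) k
  rw [projA_add_projM_add_projB, hΘ] at h
  exact eq_zero_of_add_eq_zero (iterComm_mem_corner (projA_mem _) ha k)
    (iterCommM_mem ha hm hb (projA_mem _) (projM_mem _) (projB_mem _) k)
    (iterComm_mem_corner (projB_mem _) hb k) h.symm

lemma iterComm_projA_apply_self (hΘ : ∀ t, iterComm k (Θ t) t = 0) (ha : a ∈ D.A) :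
    iterComm k (D.projA (Θ a)) a = 0 := by
  simpa only [add_zero] using (iterComm_peirce_eq_zero hΘ ha (zero_mem D.M) (zero_mem D.B)).1

lemma iterComm_projB_apply_self (hΘ : ∀ t, iterComm k (Θ t) t = 0) (hb : b ∈ D.B) :
    iterComm k (D.projB (Θ b)) b = 0 := by
  simpa only [zero_add] using (iterComm_peirce_eq_zero hΘ (zero_mem D.A) (zero_mem D.M) hb).2.2

lemma iterComm_projA_apply_of_mem (hΘ : ∀ t, iterComm k (Θ t) t = 0) (hm : m ∈ D.M)
    (hb : b ∈ D.B) (hx : x ∈ D.A) : iterComm k (D.projA (Θ (m + b))) x = 0 := by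
  have h := (iterComm_peirce_eq_zero hΘ hx hm hb).1
  rwa [add_assoc, map_add, map_add, iterComm_add_left, iterComm_projA_apply_self hΘ hx,
    zero_add] at h

lemma iterComm_projB_apply_of_mem (hΘ : ∀ t, iterComm k (Θ t) t = 0) (ha : a ∈ D.A)
    (hm : m ∈ D.M) (hy : y ∈ D.B) : iterComm k (D.projB (Θ (a + m))) y = 0 := by
  have h := (iterComm_peirce_eq_zero hΘ ha hm hy).2.2
  rwa [map_add, map_add, iterComm_add_left, iterComm_projB_apply_self hΘ hy, add_zero] at h

lemma iterComm_projA_apply_e (hΘ : ∀ t, iterComm k (Θ t) t = 0) (hx : x ∈ D.A) :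
    iterComm k (D.projA (Θ D.e)) x = 0 := by
  have h := iterComm_projA_apply_self hΘ (add_mem hx e_mem_A)
  rwa [map_add, map_add, iterComm_add_left, iterComm_add_right_of_mem_corner (projA_mem _) hx,
    iterComm_add_right_of_mem_corner (projA_mem _) hx, iterComm_projA_apply_self hΘ hx,
    zero_add] at h

lemma isIdempotentElem_e_add (hm : m ∈ D.M) : IsIdempotentElem (D.e + m) := by
  have hme : m * D.e = 0 := mul_eq_zero_of_mem_corner hm e_mem_A D.f_mul_e
  have hmm : m * m = 0 := mul_eq_zero_of_mem_corner hm hm D.f_mul_e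
  show (D.e + m) * (D.e + m) = D.e + m
  rw [mul_add, add_mul, add_mul, D.isIdempotentElem_e.eq, hm.1, hme, hmm, add_zero, add_zero]

lemma commute_apply_e_add (hk : k ≠ 0) (hΘ : ∀ t, iterComm k (Θ t) t = 0) (hm : m ∈ D.M) :
    Commute (Θ D.e + Θ m) (D.e + m) := by
  rw [← map_add]; exact commute_apply_of_isIdempotentElem hk hΘ (isIdempotentElem_e_add hm)

lemma apply_e_mul_add (hk : k ≠ 0) (hΘ : ∀ t, iterComm k (Θ t) t = 0)
    (htf : ∀ t : T, t + t = 0 → t = 0) (hm : m ∈ D.M) :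
    Θ D.e * m + Θ m * D.e = m * Θ D.e + D.e * Θ m := by
  have h₂ := commute_apply_e_add hk hΘ (neg_mem hm)
  rw [map_neg, ← sub_eq_add_neg, ← sub_eq_add_neg] at h₂
  exact mul_add_mul_eq_of_commute htf (commute_apply_e_add hk hΘ hm) h₂

lemma commute_apply_of_mem_M (hk : k ≠ 0) (hΘ : ∀ t, iterComm k (Θ t) t = 0)
    (htf : ∀ t : T, t + t = 0 → t = 0) (hm : m ∈ D.M) : Commute (Θ m) m := by
  have h₁ : Commute (Θ D.e + Θ m) (m + D.e) := add_comm D.e m ▸ commute_apply_e_add hk hΘ hm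
  have h₂ := commute_apply_e_add hk hΘ (neg_mem hm)
  rw [map_neg, ← sub_eq_add_neg, ← sub_eq_add_neg] at h₂
  have h₂' : Commute (Θ D.e - Θ m) (m - D.e) := by simpa only [neg_sub] using h₂.neg_right
  have h := mul_add_mul_eq_of_commute htf h₁ h₂'
  rw [(commute_apply_of_isIdempotentElem hk hΘ D.isIdempotentElem_e).eq] at h
  exact add_left_cancel h

lemma projM_apply_of_mem_M (hk : k ≠ 0) (hΘ : ∀ t, iterComm k (Θ t) t = 0)
    (htf : ∀ t : T, t + t = 0 → t = 0) (hm : m ∈ D.M) :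
    D.projM (Θ m) = D.projA (Θ D.e) * m - m * D.projB (Θ D.e) := by
  have h := congrArg D.projM (apply_e_mul_add hk hΘ htf hm)
  rw [map_add, map_add, projM_mul_of_mem_M hm, projM_mul_e, projM_mem_M_mul hm, projM_e_mul,
    add_zero] at h
  rw [h, add_sub_cancel_left]

lemma projM_apply_f (hk : k ≠ 0) (hΘ : ∀ t, iterComm k (Θ t) t = 0) : D.projM (Θ D.f) = 0 := by
  rw [projM_apply, mul_assoc, (commute_apply_of_isIdempotentElem hk hΘ D.isIdempotentElem_f).eq,
    ← mul_assoc, D.e_mul_f, zero_mul]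

lemma projA_apply_mul_of_mem_M (hk : k ≠ 0) (hΘ : ∀ t, iterComm k (Θ t) t = 0)
    (htf : ∀ t : T, t + t = 0 → t = 0) (hm : m ∈ D.M) :
    D.projA (Θ m) * m = m * D.projB (Θ m) := by
  have h := congrArg D.projM (commute_apply_of_mem_M hk hΘ htf hm).eq
  rwa [projM_mul_of_mem_M hm, projM_mem_M_mul hm] at h

lemma projA_apply_mul_add (hk : k ≠ 0) (hΘ : ∀ t, iterComm k (Θ t) t = 0)
    (htf : ∀ t : T, t + t = 0 → t = 0) {n : T} (hm : m ∈ D.M) (hn : n ∈ D.M) :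
    D.projA (Θ m) * n + D.projA (Θ n) * m = m * D.projB (Θ n) + n * D.projB (Θ m) := by
  have hmn := projA_apply_mul_of_mem_M hk hΘ htf (add_mem hm hn)
  rw [map_add, map_add, map_add] at hmn
  calc D.projA (Θ m) * n + D.projA (Θ n) * m
      = (D.projA (Θ m) + D.projA (Θ n)) * (m + n) - D.projA (Θ m) * m
        - D.projA (Θ n) * n := by noncomm_ring
    _ = (m + n) * (D.projB (Θ m) + D.projB (Θ n)) - m * D.projB (Θ m)
        - n * D.projB (Θ n) := by
      rw [hmn, projA_apply_mul_of_mem_M hk hΘ htf hm, projA_apply_mul_of_mem_M hk hΘ htf hn]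
    _ = m * D.projB (Θ n) + n * D.projB (Θ m) := by noncomm_ring

lemma projM_apply_of_mem_A (hk : k ≠ 0) (hΘ : ∀ t, iterComm k (Θ t) t = 0) (ha : a ∈ D.A) :
    D.projM (Θ a) = 0 := by
  have h₀ := (iterComm_peirce_eq_zero hΘ ha (zero_mem D.M) (zero_mem D.B)).2.1
  have h₁ := (iterComm_peirce_eq_zero hΘ ha (zero_mem D.M) f_mem_B).2.1
  rw [add_zero, add_zero, iterCommM_zero_zero, neg_pow_mul_eq_zero_iff] at h₀
  rw [iterCommM_zero_of_mul_eq (projM_mem _).2, add_zero, map_add, map_add,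
    projM_apply_f hk hΘ, add_zero] at h₁
  exact eq_zero_of_pow_mul_eq_zero ((Commute.one_right a).sub_right (Commute.refl a)) h₀ h₁
    (by rw [add_sub_cancel, one_mul])

/-- The part of the `eTf`-corner of `[Θ (a + m), a + m]_k` that is odd in `m`. -/
lemma iterCommM_apply_eq_zero (hΘ : ∀ t, iterComm k (Θ t) t = 0)
    (htf : ∀ t : T, t + t = 0 → t = 0) (ha : a ∈ D.A) (hm : m ∈ D.M) :
    iterCommM a m 0 (D.projA (Θ a)) (D.projM (Θ m)) (D.projB (Θ a)) k = 0 := by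
  have hpos := (iterComm_peirce_eq_zero hΘ ha hm (zero_mem D.B)).2.1
  have hneg := (iterComm_peirce_eq_zero hΘ ha (neg_mem hm) (zero_mem D.B)).2.1
  simp only [add_zero, map_add] at hpos
  simp only [add_zero, ← sub_eq_add_neg, map_sub] at hneg
  have h := iterCommM_sub_iterCommM_neg (a := a) (m := m) (b := 0) (P := D.projA (Θ a))
    (Q := D.projM (Θ a)) (S := D.projB (Θ a)) (P' := D.projA (Θ m)) (Q' := D.projM (Θ m))
    (S' := D.projB (Θ m)) k
  rw [hpos, hneg, sub_zero] at h
  exact htf _ h.symm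

lemma neg_pow_mul_projA_sub_eq_zero (hk : k ≠ 0) (hΘ : ∀ t, iterComm k (Θ t) t = 0)
    (htf : ∀ t : T, t + t = 0 → t = 0) (hlam : lam ∈ Subring.center T)
    (hQ : ∀ m ∈ D.M, D.projM (Θ m) = lam * m) (ha : a ∈ D.A) (hw : w ∈ Subring.center T)
    (hwa : D.projB (Θ a) = D.projB w) :
    (-a) ^ k * (D.projA (Θ a) - D.projA lam * a - D.projA w) = 0 := by
  set δ := D.projA (Θ a) - D.projA lam * a - D.projA w with hδ
  have hc : Commute (D.projA lam * a + D.projA w) a :=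
    ((commute_projA_of_mem_center hlam ha).mul_left (Commute.refl a)).add_left
      (commute_projA_of_mem_center hw ha)
  have hδA : δ ∈ D.A :=
    sub_mem (sub_mem (projA_mem _) (mul_mem_corner (projA_mem _) ha)) (projA_mem _)
  have hsum : iterCommSum (-a) δ a k = 0 := by
    refine D.faithful_left _ (iterCommSum_mem_corner (neg_mem ha) hδA ha k) fun m hm => ?_
    have h := iterCommM_apply_eq_zero hΘ htf ha hm
    have hvan : (D.projA lam * a + D.projA w) * m - m * D.projB w - a * (lam * m) = 0 := by
      rw [add_mul, mul_assoc, projA_mul_of_mem_center hlam (mul_mem_corner ha hm).1,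
        projA_mul_of_mem_center hw hm.1, mul_projB_of_mem_center hw hm.2, ← mul_assoc a,
        Subring.mem_center_iff.mp hlam a]
      noncomm_ring
    rw [show D.projA (Θ a) = δ + (D.projA lam * a + D.projA w) by rw [hδ]; abel, hQ m hm, hwa,
      ← zero_add (lam * m), ← zero_add (D.projB w), iterCommM_add,
      iterCommM_eq_zero_of_commute hc (Commute.zero_right _) (by simpa using hvan) hk,
      add_zero, iterCommM_eq_iterCommSum_mul] at h
    exact h
  refine pow_mul_eq_zero_of_iterCommSum_eq_zero (Commute.neg_left (Commute.refl a)) ?_ hsum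
  rw [hδ, sub_sub, iterComm_sub_left, iterComm_projA_apply_self hΘ ha,
    iterComm_eq_zero_of_commute hc hk, sub_zero]

lemma projA_apply_of_mem_A (hk : k ≠ 0) (hΘ : ∀ t, iterComm k (Θ t) t = 0)
    (htf : ∀ t : T, t + t = 0 → t = 0) (hB : HasCentralLifts D.f k)
    (hlam : lam ∈ Subring.center T) (hQ : ∀ m ∈ D.M, D.projM (Θ m) = lam * m) (ha : a ∈ D.A)
    (hw : w ∈ Subring.center T) (hwa : D.projB (Θ a) = D.projB w) :
    D.projA (Θ a) = D.projA lam * a + D.projA w := by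
  obtain ⟨we, hwe, (hSe : D.projB (Θ D.e) = D.projB we)⟩ := hB _ (projB_mem (Θ D.e)) fun y hy => by
    simpa only [add_zero] using iterComm_projB_apply_of_mem hΘ e_mem_A (zero_mem D.M) hy
  have anchor : D.projA (Θ D.e) - D.projA lam - D.projA we = 0 := by
    refine D.faithful_left _ (sub_mem (sub_mem (projA_mem _) (projA_mem _)) (projA_mem _))
      fun m hm => ?_
    rw [sub_mul, sub_mul, projA_mul_of_mem_center hlam hm.1, projA_mul_of_mem_center hwe hm.1,
      ← hQ m hm, projM_apply_of_mem_M hk hΘ htf hm, hSe, mul_projB_of_mem_center hwe hm.2]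
    abel
  set δ := D.projA (Θ a) - D.projA lam * a - D.projA w with hδ
  have hδA : δ ∈ D.A :=
    sub_mem (sub_mem (projA_mem _) (mul_mem_corner (projA_mem _) ha)) (projA_mem _)
  have hδe : D.projA (Θ (a + D.e)) - D.projA lam * (a + D.e) - D.projA (w + we) = δ := by
    rw [map_add, map_add, map_add, mul_add, (projA_mem lam).2, ← add_zero δ, ← anchor, hδ]
    abel
  have h₀ := neg_pow_mul_projA_sub_eq_zero hk hΘ htf hlam hQ ha hw hwa
  have h₁ := neg_pow_mul_projA_sub_eq_zero hk hΘ htf hlam hQ (add_mem ha e_mem_A)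
    (add_mem hw hwe) (by rw [map_add, map_add, map_add, hwa, hSe])
  rw [hδe, neg_pow_mul_eq_zero_iff] at h₁
  have hea : Commute D.e a := ha.1.trans ha.2.symm
  have hδ0 : δ = 0 := eq_zero_of_pow_mul_eq_zero ((Commute.refl a).add_left hea).neg_right h₁ h₀
    (by rw [add_neg_cancel_comm, hδA.1])
  rwa [hδ, sub_sub, sub_eq_zero] at hδ0

lemma apply_sub_mul_mem_center_of_mem_A (hk : k ≠ 0) (hΘ : ∀ t, iterComm k (Θ t) t = 0)
    (htf : ∀ t : T, t + t = 0 → t = 0) (hB : HasCentralLifts D.f k)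
    (hlam : lam ∈ Subring.center T) (hQ : ∀ m ∈ D.M, D.projM (Θ m) = lam * m) (ha : a ∈ D.A) :
    Θ a - lam * a ∈ Subring.center T := by
  obtain ⟨w, hw, (hwa : D.projB (Θ a) = D.projB w)⟩ := hB _ (projB_mem (Θ a)) fun y hy => by
    simpa only [add_zero] using iterComm_projB_apply_of_mem hΘ ha (zero_mem D.M) hy
  convert hw using 1
  rw [← projA_add_projM_add_projB (Θ a), projM_apply_of_mem_A hk hΘ ha,
    projA_apply_of_mem_A hk hΘ htf hB hlam hQ ha hw hwa, hwa,
    ← projA_mul_of_mem_center hlam ha.1, add_zero,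
    add_assoc, add_sub_cancel_left, projA_add_projB_of_mem_center hw]

section Opposite

open MulOpposite

variable (D) in
def op : TriangularDecomp Tᵐᵒᵖ where
  e := MulOpposite.op D.f
  f := MulOpposite.op D.e
  e_add_f := by rw [← op_add, add_comm, D.e_add_f, op_one]
  isIdempotentElem_e := by
    show MulOpposite.op D.f * MulOpposite.op D.f = MulOpposite.op D.f
    rw [← op_mul, D.isIdempotentElem_f.eq]
  f_mul_mul_e g := by rw [← op_unop g, ← op_mul, ← op_mul, ← mul_assoc, D.f_mul_mul_e, op_zero]
  faithful_left a ha h := unop_injective <| D.faithful_right (unop a) (op_mem_corner_iff.mp ha)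
    fun m hm => op_injective (h (MulOpposite.op m) (op_mem_corner_iff.mpr hm))
  faithful_right b hb h := unop_injective <| D.faithful_left (unop b) (op_mem_corner_iff.mp hb)
    fun m hm => op_injective (h (MulOpposite.op m) (op_mem_corner_iff.mpr hm))

@[simp] lemma op_e : D.op.e = MulOpposite.op D.f := rfl
@[simp] lemma op_f : D.op.f = MulOpposite.op D.e := rfl

lemma apply_sub_mul_mem_center_of_mem_B (hk : k ≠ 0) (hΘ : ∀ t, iterComm k (Θ t) t = 0)
    (htf : ∀ t : T, t + t = 0 → t = 0) (hA : HasCentralLifts D.e k)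
    (hlam : lam ∈ Subring.center T) (hQ : ∀ m ∈ D.M, D.projM (Θ m) = lam * m) (hb : b ∈ D.B) :
    Θ b - lam * b ∈ Subring.center T := by
  have h := D.op.apply_sub_mul_mem_center_of_mem_A (Θ := AddMonoidHom.mulOp Θ)
    (lam := MulOpposite.op lam) hk (fun t => iterComm_op_eq_zero_iff.mpr (hΘ (unop t)))
    (fun t ht => unop_injective (htf _ (op_injective ht))) hA.op (op_mem_center_iff.mpr hlam)
    (fun m hm => unop_injective ?_) (op_mem_corner_iff.mpr hb)
  · rw [← Subring.mem_center_iff.mp hlam b]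
    exact op_mem_center_iff.mp
      (by simpa using h : MulOpposite.op (Θ b - b * lam) ∈ Subring.center Tᵐᵒᵖ)
  · simp only [projM_apply, op_e, op_f, AddMonoidHom.mulOp_apply_apply, Function.comp_apply,
      unop_mul, unop_op, ← mul_assoc]
    rw [← projM_apply, hQ (unop m) (op_mem_corner_iff.mp hm)]
    exact (Subring.mem_center_iff.mp hlam _).symm

end Opposite

lemma exists_projM_apply_eq_mul (hk : k ≠ 0) (hΘ : ∀ t, iterComm k (Θ t) t = 0)
    (htf : ∀ t : T, t + t = 0 → t = 0) (hA : HasCentralLifts D.e k)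
    (hB : HasCentralLifts D.f k) :
    ∃ lam ∈ Subring.center T, ∀ m ∈ D.M, D.projM (Θ m) = lam * m := by
  obtain ⟨z, hz, (hPe : D.projA (Θ D.e) = D.projA z)⟩ :=
    hA _ (projA_mem (Θ D.e)) fun x hx => iterComm_projA_apply_e hΘ hx
  obtain ⟨w, hw, (hSe : D.projB (Θ D.e) = D.projB w)⟩ := hB _ (projB_mem (Θ D.e)) fun y hy => by
    simpa only [add_zero] using iterComm_projB_apply_of_mem hΘ e_mem_A (zero_mem D.M) hy
  refine ⟨z - w, sub_mem hz hw, fun m hm => ?_⟩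
  rw [projM_apply_of_mem_M hk hΘ htf hm, hPe, hSe, projA_mul_of_mem_center hz hm.1,
    mul_projB_of_mem_center hw hm.2, sub_mul]

lemma apply_sub_mul_mem_center_of_mem_M (hk : k ≠ 0) (hΘ : ∀ t, iterComm k (Θ t) t = 0)
    (htf : ∀ t : T, t + t = 0 → t = 0) (hA : HasCentralLifts D.e k)
    (hB : HasCentralLifts D.f k) {m0 : T} (hm0 : m0 ∈ D.M)
    (hZ : ∀ a ∈ D.A, ∀ b ∈ D.B, (∀ x ∈ D.A, a * x = x * a) → (∀ y ∈ D.B, b * y = y * b) →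
      a * m0 = m0 * b → a + b ∈ Subring.center T)
    (hQ : ∀ m ∈ D.M, D.projM (Θ m) = lam * m) (hm : m ∈ D.M) :
    Θ m - lam * m ∈ Subring.center T := by
  have key : ∀ n ∈ D.M, D.projA (Θ n) * m0 = m0 * D.projB (Θ n) →
      D.projA (Θ n) + D.projB (Θ n) ∈ Subring.center T := by
    intro n hn h
    obtain ⟨z, hz, hzn⟩ := hA _ (projA_mem (Θ n)) fun x hx => by
      simpa only [add_zero] using iterComm_projA_apply_of_mem hΘ hn (zero_mem D.B) hx
    obtain ⟨w, hw, hwn⟩ := hB _ (projB_mem (Θ n)) fun y hy => by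
      simpa only [zero_add] using iterComm_projB_apply_of_mem hΘ (zero_mem D.A) hn hy
    refine hZ _ (projA_mem _) _ (projB_mem _) (fun x hx => ?_) (fun y hy => ?_) h
    · rw [hzn]; exact commute_projA_of_mem_center hz hx
    · rw [hwn]; exact commute_projB_of_mem_center hw hy
  have hc0 := key m0 hm0 (projA_apply_mul_of_mem_M hk hΘ htf hm0)
  have h0 : D.projA (Θ m0) * m = m * D.projB (Θ m0) := by
    have h := Subring.mem_center_iff.mp hc0 m
    rwa [mul_add, add_mul, mul_eq_zero_of_mem_corner hm (projA_mem _) D.f_mul_e,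
      mul_eq_zero_of_mem_corner (projB_mem _) hm D.f_mul_e, zero_add, add_zero, eq_comm] at h
  have h := projA_apply_mul_add hk hΘ htf hm hm0
  rw [h0, add_comm (m * _)] at h
  convert key m hm (add_right_cancel h) using 1
  have hΘm := D.projA_add_projM_add_projB (Θ m)
  rw [hQ m hm] at hΘm
  rw [sub_eq_iff_eq_add]
  nth_rewrite 1 [← hΘm]
  abel

theorem exists_apply_sub_mul_mem_center (hk : k ≠ 0) (hΘ : ∀ t, iterComm k (Θ t) t = 0)
    (htf : ∀ t : T, t + t = 0 → t = 0) (hA : HasCentralLifts D.e k)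
    (hB : HasCentralLifts D.f k) {m0 : T} (hm0 : m0 ∈ D.M)
    (hZ : ∀ a ∈ D.A, ∀ b ∈ D.B, (∀ x ∈ D.A, a * x = x * a) → (∀ y ∈ D.B, b * y = y * b) →
      a * m0 = m0 * b → a + b ∈ Subring.center T) :
    ∃ lam ∈ Subring.center T, ∀ t, Θ t - lam * t ∈ Subring.center T := by
  obtain ⟨lam, hlam, hQ⟩ := exists_projM_apply_eq_mul hk hΘ htf hA hB
  refine ⟨lam, hlam, fun t => ?_⟩
  have h := add_mem (add_mem
    (apply_sub_mul_mem_center_of_mem_A hk hΘ htf hB hlam hQ (projA_mem t))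
    (apply_sub_mul_mem_center_of_mem_M hk hΘ htf hA hB hm0 hZ hQ (projM_mem t)))
    (apply_sub_mul_mem_center_of_mem_B hk hΘ htf hA hlam hQ (projB_mem t))
  convert h using 1
  conv_lhs => rw [← D.projA_add_projM_add_projB t]
  rw [map_add, map_add]
  noncomm_ring

end TriangularDecomp

theorem kCommuting_proper_triangular_general
    {R : Type*} [CommRing R] {T : Type*} [Ring T] [Algebra R T]
    (e : T) (he : e * e = e) (f : T) (hf : f = 1 - e)
    (htri : ∀ g : T, f * g * e = 0)
    (hMfaithL : ∀ a : T, a = e * a * e → (∀ m : T, m = e * m * f → a * m = 0) → a = 0)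
    (hMfaithR : ∀ b : T, b = f * b * f → (∀ m : T, m = e * m * f → m * b = 0) → b = 0)
    (htf : ∀ t : T, t + t = 0 → t = 0)
    (k : ℕ) (hk : 2 ≤ k)
    -- (1): Z(A)_k = π_A(Z(T))
    (hZAk : ∀ c : T,
      (c = e * c * e ∧ ∀ x : T, x = e * x * e → iterComm k c x = 0) ↔
      (∃ z : T, (∀ x : T, z * x = x * z) ∧ c = e * z * e))
    -- (2): Z(B)_k = π_B(Z(T))
    (hZBk : ∀ c : T,
      (c = f * c * f ∧ ∀ y : T, y = f * y * f → iterComm k c y = 0) ↔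
      (∃ z : T, (∀ x : T, z * x = x * z) ∧ c = f * z * f))
    -- (3): description of Z(T) via m0
    (hZT : ∃ m0 : T, m0 = e * m0 * f ∧
      ∀ z : T, (∀ x : T, z * x = x * z) ↔
        ∃ a b : T, (a = e * a * e ∧ ∀ x : T, x = e * x * e → a * x = x * a) ∧
          (b = f * b * f ∧ ∀ y : T, y = f * y * f → b * y = y * b) ∧
          a * m0 = m0 * b ∧ z = a + b)
    (Θ : T →ₗ[R] T) (hΘ : ∀ t : T, iterComm k (Θ t) t = 0) :
    ∃ lam : T, (∀ x : T, lam * x = x * lam) ∧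
      ∃ ζ : T →ₗ[R] T, (∀ t x : T, ζ t * x = x * ζ t) ∧
        ∀ t : T, Θ t = lam * t + ζ t := by
  have he' : IsIdempotentElem e := he
  have hf' : IsIdempotentElem f := hf ▸ he'.one_sub
  have memA {x : T} : x ∈ corner e e ↔ x = e * x * e := mem_corner_iff_eq he' he'
  have memM {x : T} : x ∈ corner e f ↔ x = e * x * f := mem_corner_iff_eq he' hf'
  have memB {x : T} : x ∈ corner f f ↔ x = f * x * f := mem_corner_iff_eq hf' hf'
  have hcen {z : T} : z ∈ Subring.center T ↔ ∀ x, z * x = x * z :=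
    Subring.mem_center_iff.trans (forall_congr' fun _ => eq_comm)
  let D : TriangularDecomp T :=
    { e, f, e_add_f := by rw [hf, add_sub_cancel], isIdempotentElem_e := he', f_mul_mul_e := htri,
      faithful_left := fun a ha h => hMfaithL a (memA.mp ha) fun m hm => h m (memM.mpr hm),
      faithful_right := fun b hb h => hMfaithR b (memB.mp hb) fun m hm => h m (memM.mpr hm) }
  obtain ⟨m0, hm0, hZ⟩ := hZT
  obtain ⟨lam, hlam, hζ⟩ :=
    TriangularDecomp.exists_apply_sub_mul_mem_center (D := D) (Θ := Θ.toAddMonoidHom) (by omega)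
      hΘ htf (.of_forall he' fun c => (hZAk c).mp) (.of_forall hf' fun c => (hZBk c).mp)
      (memM.mpr hm0) fun a ha b hb hca hcb hab => hcen.mpr <| (hZ (a + b)).mpr
        ⟨a, b, ⟨memA.mp ha, fun x hx => hca x (memA.mpr hx)⟩,
          ⟨memB.mp hb, fun y hy => hcb y (memB.mpr hy)⟩, hab, rfl⟩
  refine ⟨lam, hcen.mp hlam, Θ - LinearMap.mulLeft R lam, fun t => hcen.mp (hζ t), fun t => ?_⟩
  simp

/-- Du–Wang: let `T` be a 2-torsion free triangular algebra with Peirce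
corners `A = eTe`, `B = fTf`, `M = eTf` (and `fTe = 0`). Under conditions (1)-(3), every
k-commuting `R`-linear map of `T` is proper. -/
theorem kCommuting_proper_triangular
    {R : Type*} [CommRing R] {T : Type*} [Ring T] [Algebra R T]
    (e : T) (he : e * e = e) (f : T) (hf : f = 1 - e)
    (htri : ∀ g : T, f * g * e = 0)
    (hM : ∃ m : T, m = e * m * f ∧ m ≠ 0)
    (hMfaithL : ∀ a : T, a = e * a * e → (∀ m : T, m = e * m * f → a * m = 0) → a = 0)
    (hMfaithR : ∀ b : T, b = f * b * f → (∀ m : T, m = e * m * f → m * b = 0) → b = 0)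
    (htf : ∀ t : T, t + t = 0 → t = 0)
    (k : ℕ) (hk : 2 ≤ k)
    -- (1): Z(A)_k = π_A(Z(T))
    (hZAk : ∀ c : T,
      (c = e * c * e ∧ ∀ x : T, x = e * x * e → iterComm k c x = 0) ↔
      (∃ z : T, (∀ x : T, z * x = x * z) ∧ c = e * z * e))
    -- (2): Z(B)_k = π_B(Z(T))
    (hZBk : ∀ c : T,
      (c = f * c * f ∧ ∀ y : T, y = f * y * f → iterComm k c y = 0) ↔
      (∃ z : T, (∀ x : T, z * x = x * z) ∧ c = f * z * f))
    -- (3): description of Z(T) via m0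
    (hZT : ∃ m0 : T, m0 = e * m0 * f ∧
      ∀ z : T, (∀ x : T, z * x = x * z) ↔
        ∃ a b : T, (a = e * a * e ∧ ∀ x : T, x = e * x * e → a * x = x * a) ∧
          (b = f * b * f ∧ ∀ y : T, y = f * y * f → b * y = y * b) ∧
          a * m0 = m0 * b ∧ z = a + b)
    (Θ : T →ₗ[R] T) (hΘ : ∀ t : T, iterComm k (Θ t) t = 0) :
    ∃ lam : T, (∀ x : T, lam * x = x * lam) ∧
      ∃ ζ : T →ₗ[R] T, (∀ t x : T, ζ t * x = x * ζ t) ∧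
        ∀ t : T, Θ t = lam * t + ζ t :=
  kCommuting_proper_triangular_general e he f hf htri hMfaithL hMfaithR htf k hk hZAk hZBk hZT Θ hΘ
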